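/- arXiv:2210.12036 — 2 statements merged into one kernel-verified Lean document; each statement's English description precedes it below -/
import Mathlib

section
/- Let p1p3 and p2p4 be two crossing segments in the plane, and let ℓ be any line avoiding all four points p1, p2, p3, p4. Then the number of segments among the new pair {p1p4, p2p3} crossed by ℓ is at most the number of segments among the old pair {p1p3, p2p4} crossed by ℓ; i.e., a flip never increases the potential Φ_ℓ of any such line. -/
open scoped Classical

noncomputable section

/-- The plane. -/
abbrev Pl := ℝ × ℝ
/-- A segment, as an ordered pair of endpoints. -/
abbrev Seg := Pl × Pl

/-- The set of points of a segment. -/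
def segSet (s : Seg) : Set Pl := segment ℝ s.1 s.2

/-- Two segments cross: they intersect in exactly one point which is
not an endpoint of either. -/
def Cross (s t : Seg) : Prop :=
  ∃ x : Pl, segSet s ∩ segSet t = {x} ∧ x ≠ s.1 ∧ x ≠ s.2 ∧ x ≠ t.1 ∧ x ≠ t.2

/-- The line through two points. -/
def lineThrough (p q : Pl) : Set Pl := {x | Collinear ℝ ({p, q, x} : Set Pl)}

/-- A line crosses a segment: they intersect in exactly one point which is
not an endpoint of the segment. -/
def LineCross (l : Set Pl) (s : Seg) : Prop :=
  ∃ x : Pl, l ∩ segSet s = {x} ∧ x ≠ s.1 ∧ x ≠ s.2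

/-- Signed side of the line through `a` and `b` on which `x` lies. -/
def sideVal (a b x : Pl) : ℝ :=
  (b.1 - a.1) * (x.2 - a.2) - (b.2 - a.2) * (x.1 - a.1)

/-- General position: no three (distinct) points of `S` are collinear. -/
def GenPos (S : Set Pl) : Prop :=
  ∀ a ∈ S, ∀ b ∈ S, ∀ c ∈ S, a ≠ b → a ≠ c → b ≠ c → ¬ Collinear ℝ ({a, b, c} : Set Pl)

/-- Strictly convex position. -/
def ConvexPos (S : Set Pl) : Prop := ∀ p ∈ S, p ∉ convexHull ℝ (S \ {p})

/-- A set of segments is a matching: no degenerate segment and all endpoints distinct. -/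
def IsMatching (M : Finset Seg) : Prop :=
  (∀ s ∈ M, s.1 ≠ s.2) ∧
  ∀ s ∈ M, ∀ t ∈ M, s ≠ t → ({s.1, s.2} : Set Pl) ∩ {t.1, t.2} = ∅

/-- A perfect matching on the point set `P`. -/
def IsPM (P : Finset Pl) (M : Finset Seg) : Prop :=
  IsMatching M ∧ (∀ s ∈ M, s.1 ∈ P ∧ s.2 ∈ P) ∧
  ∀ p ∈ P, ∃ s ∈ M, p = s.1 ∨ p = s.2

/-- Number of (unordered) crossing pairs of segments of `M`. -/
def phiX (M : Finset Seg) : ℕ :=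
  Set.ncard {z : Sym2 Seg | ∃ u t : Seg, z = s(u, t) ∧ u ∈ M ∧ t ∈ M ∧ Cross u t}

/-- Number of segments of `M` crossed by the line `l`. -/
def phiLine (l : Set Pl) (M : Finset Seg) : ℕ :=
  Set.ncard {s : Seg | s ∈ M ∧ LineCross l s}

/-- All lines through two points of `P`. -/
def linesOf (P : Finset Pl) : Set (Set Pl) :=
  {l | ∃ p ∈ P, ∃ q ∈ P, p ≠ q ∧ l = lineThrough p q}

/-- The line potential with respect to a set of lines `L`. -/
def phiL (L : Set (Set Pl)) (M : Finset Seg) : ℕ := ∑ᶠ l ∈ L, phiLine l M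

/-- A flip in the matching version: replace a crossing pair by one of the two
non-crossing pairs on the same four endpoints. -/
def IsFlip (M M' : Finset Seg) : Prop :=
  ∃ p1 p2 p3 p4 : Pl,
    Cross (p1, p3) (p2, p4) ∧ (p1, p3) ∈ M ∧ (p2, p4) ∈ M ∧
    ((¬ Cross (p1, p4) (p2, p3) ∧ M' = (M \ {(p1, p3), (p2, p4)}) ∪ {(p1, p4), (p2, p3)}) ∨
     (¬ Cross (p1, p2) (p3, p4) ∧ M' = (M \ {(p1, p3), (p2, p4)}) ∪ {(p1, p2), (p3, p4)}))

/-- `t1, t2` reconnect the four endpoints of `s1, s2` forming a 4-cycle. -/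
def Rewires (s1 s2 t1 t2 : Seg) : Prop :=
  ∃ a b c d : Pl, ({s1.1, s1.2} : Set Pl) = {a, b} ∧ ({s2.1, s2.2} : Set Pl) = {c, d} ∧
    ((({t1.1, t1.2} : Set Pl) = {a, c} ∧ ({t2.1, t2.2} : Set Pl) = {b, d}) ∨
     (({t1.1, t1.2} : Set Pl) = {a, d} ∧ ({t2.1, t2.2} : Set Pl) = {b, c}))

/-- A flip in the multigraph (multiset) version. -/
def IsFlipMS (M M' : Multiset Seg) : Prop :=
  ∃ p1 p2 p3 p4 : Pl, Cross (p1, p3) (p2, p4) ∧ (p1, p3) ∈ M ∧ (p2, p4) ∈ M ∧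
    ∃ t1 t2 : Seg, Rewires (p1, p3) (p2, p4) t1 t2 ∧ ¬ Cross t1 t2 ∧
      M' = t1 ::ₘ t2 ::ₘ ((M.erase (p1, p3)).erase (p2, p4))

/-- A red-blue perfect matching: first coordinates red, second coordinates blue. -/
def IsRBPM (R B : Finset Pl) (M : Finset Seg) : Prop :=
  IsMatching M ∧ (∀ s ∈ M, s.1 ∈ R ∧ s.2 ∈ B) ∧
  (∀ p ∈ R, ∃ s ∈ M, p = s.1) ∧ (∀ p ∈ B, ∃ s ∈ M, p = s.2)

/-- A flip in the red-blue matching version (the replacement pair is forced). -/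
def IsRBFlip (M M' : Finset Seg) : Prop :=
  ∃ r1 b1 r2 b2 : Pl, Cross (r1, b1) (r2, b2) ∧ (r1, b1) ∈ M ∧ (r2, b2) ∈ M ∧
    ¬ Cross (r1, b2) (r2, b1) ∧ M' = (M \ {(r1, b1), (r2, b2)}) ∪ {(r1, b2), (r2, b1)}

/-- `T` is (the edge set of) a tour on `N` points. -/
def IsTour (T : Finset Seg) (N : ℕ) : Prop :=
  3 ≤ N ∧ ∃ v : Fin N → Pl, Function.Injective v ∧
    T = Finset.image (fun i : Fin N => (v i, v (finRotate N i))) Finset.univ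

/-- A flip in the TSP version: remove two crossing tour edges and reconnect the
four endpoints. -/
def IsTSPFlip (T T' : Finset Seg) : Prop :=
  ∃ s1 s2 t1 t2 : Seg, Cross s1 s2 ∧ s1 ∈ T ∧ s2 ∈ T ∧ Rewires s1 s2 t1 t2 ∧
    T' = (T \ {s1, s2}) ∪ {t1, t2}

/-- `a` and `b` are consecutive points on the convex-hull boundary of `Q`. -/
def HullEdge (Q : Finset Pl) (a b : Pl) : Prop :=
  a ∈ Q ∧ b ∈ Q ∧ a ≠ b ∧
  ((∀ c ∈ Q, c ≠ a → c ≠ b → 0 < sideVal a b c) ∨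
   (∀ c ∈ Q, c ≠ a → c ≠ b → sideVal a b c < 0))

/-- The line-potential drop of a flip, independent of the ambient matching. -/
def flipDrop (P : Finset Pl) (p1 p2 p3 p4 : Pl) : ℤ :=
  ∑ᶠ l ∈ linesOf P,
    ((phiLine l {(p1, p3), (p2, p4)} : ℤ) - (phiLine l {(p1, p4), (p2, p3)} : ℤ))

/-! `sideVal a b` is an affine function vanishing exactly on the line through `a` and `b`, so
its values along a segment fill the interval between its values at the endpoints. Hence the
line crosses a segment with endpoints off the line iff the endpoints lie on opposite sides.
If the line crosses neither `p1p3` nor `p2p4`, each pair lies on one side, and the common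
point of the two segments puts all four points on the same side, so neither new segment is
crossed. If it crosses exactly one, say `p1p3`, then `p2` and `p4` are on one side and exactly
one of `p1p4`, `p2p3` is crossed; if it crosses both, the bound `2` is trivial. -/

def sideValAffine (a b : Pl) : Pl →ᵃ[ℝ] ℝ where
  toFun := sideVal a b
  linear := (b.1 - a.1) • LinearMap.snd ℝ ℝ ℝ - (b.2 - a.2) • LinearMap.fst ℝ ℝ ℝ
  map_vadd' p v := by
    simp only [sideVal, vadd_eq_add, Prod.fst_add, Prod.snd_add, LinearMap.sub_apply,
      LinearMap.smul_apply, LinearMap.snd_apply, LinearMap.fst_apply, smul_eq_mul]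
    ring

lemma coe_sideValAffine (a b : Pl) : ⇑(sideValAffine a b) = sideVal a b := rfl

lemma sideVal_lineMap (a b p q : Pl) (t : ℝ) :
    sideVal a b (AffineMap.lineMap p q t) =
      AffineMap.lineMap (sideVal a b p) (sideVal a b q) t :=
  (sideValAffine a b).apply_lineMap p q t

lemma exists_lineMap_eq_of_sideVal_eq_zero {a b x : Pl} (hab : a ≠ b) (hx : sideVal a b x = 0) :
    ∃ r : ℝ, AffineMap.lineMap a b r = x := by
  simp only [sideVal] at hx
  by_cases h1 : b.1 - a.1 = 0
  · have h2 : b.2 - a.2 ≠ 0 := fun h2 ↦ hab (Prod.ext (by linarith) (by linarith))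
    refine ⟨(x.2 - a.2) / (b.2 - a.2), Prod.ext ?_ ?_⟩ <;>
      simp only [AffineMap.lineMap_apply_module, Prod.fst_add, Prod.snd_add, Prod.smul_fst,
        Prod.smul_snd, smul_eq_mul] <;> field_simp
    · linear_combination hx
    · ring
  · refine ⟨(x.1 - a.1) / (b.1 - a.1), Prod.ext ?_ ?_⟩ <;>
      simp only [AffineMap.lineMap_apply_module, Prod.fst_add, Prod.snd_add, Prod.smul_fst,
        Prod.smul_snd, smul_eq_mul] <;> field_simp
    · ring
    · linear_combination -hx

lemma mem_lineThrough_iff (a b x : Pl) : x ∈ lineThrough a b ↔ sideVal a b x = 0 := by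
  obtain rfl | hab := eq_or_ne a b
  · simp [lineThrough, sideVal, collinear_pair]
  have hline : x ∈ lineThrough a b ↔ x ∈ line[ℝ, a, b] := by
    refine ⟨fun h ↦ Collinear.mem_affineSpan_of_mem_of_ne h (by simp) (by simp) (by simp) hab,
      fun h ↦ ?_⟩
    have := collinear_insert_of_mem_affineSpan_pair h
    rwa [Set.insert_comm, Set.pair_comm] at this
  rw [hline, mem_affineSpan_pair_iff_exists_lineMap_eq]
  refine ⟨?_, exists_lineMap_eq_of_sideVal_eq_zero hab⟩
  rintro ⟨r, rfl⟩
  have ha : sideVal a b a = 0 := by simp [sideVal]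
  have hb : sideVal a b b = 0 := by simp only [sideVal]; ring
  rw [sideVal_lineMap, ha, hb, AffineMap.lineMap_same_apply]

lemma sideVal_mem_uIcc {a b p q x : Pl} (hx : x ∈ segment ℝ p q) :
    sideVal a b x ∈ Set.uIcc (sideVal a b p) (sideVal a b q) := by
  rw [← segment_eq_uIcc, ← coe_sideValAffine, ← image_segment]
  exact Set.mem_image_of_mem _ hx

lemma sideVal_injOn_segment {a b p q : Pl} (h : sideVal a b p ≠ sideVal a b q) :
    Set.InjOn (sideVal a b) (segment ℝ p q) := by
  rw [segment_eq_image_lineMap]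
  rintro _ ⟨s, -, rfl⟩ _ ⟨t, -, rfl⟩ hst
  rw [sideVal_lineMap, sideVal_lineMap] at hst
  rw [AffineMap.lineMap_injective ℝ h hst]

lemma zero_mem_uIcc_iff_xor {u v : ℝ} (hu : u ≠ 0) (hv : v ≠ 0) :
    (0 : ℝ) ∈ Set.uIcc u v ↔ Xor (0 < u) (0 < v) := by
  simp only [Set.mem_uIcc, Xor, not_lt, hu.le_iff_lt, hv.le_iff_lt, hu.symm.le_iff_lt,
    hv.symm.le_iff_lt]
  tauto

lemma lineCross_lineThrough_iff {a b p q : Pl} (hp : sideVal a b p ≠ 0) (hq : sideVal a b q ≠ 0) :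
    LineCross (lineThrough a b) (p, q) ↔ Xor (0 < sideVal a b p) (0 < sideVal a b q) := by
  constructor
  · rintro ⟨x, hx, -⟩
    have hx' : x ∈ lineThrough a b ∩ segSet (p, q) := hx ▸ rfl
    rw [← zero_mem_uIcc_iff_xor hp hq, ← (mem_lineThrough_iff a b x).1 hx'.1]
    exact sideVal_mem_uIcc hx'.2
  · intro hxor
    have hpq : sideVal a b p ≠ sideVal a b q := fun h ↦ by rw [h, xor_self] at hxor; exact hxor
    have h0 := (zero_mem_uIcc_iff_xor hp hq).2 hxor
    rw [← segment_eq_uIcc, ← coe_sideValAffine, ← image_segment] at h0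
    obtain ⟨x, hx, hx0 : sideVal a b x = 0⟩ := h0
    refine ⟨x, Set.eq_singleton_iff_unique_mem.2 ⟨⟨(mem_lineThrough_iff a b x).2 hx0, hx⟩, ?_⟩,
      ?_, ?_⟩
    · rintro y ⟨hy, hy'⟩
      exact sideVal_injOn_segment hpq hy' hx (((mem_lineThrough_iff a b y).1 hy).trans hx0.symm)
    all_goals rintro rfl; contradiction

lemma pos_iff_of_mem_segment {a b p q x : Pl} (hp : sideVal a b p ≠ 0) (hq : sideVal a b q ≠ 0)
    (hpq : 0 < sideVal a b p ↔ 0 < sideVal a b q) (hx : x ∈ segment ℝ p q) :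
    0 < sideVal a b x ↔ 0 < sideVal a b p := by
  have hx' := sideVal_mem_uIcc (a := a) (b := b) hx
  rcases hp.lt_or_gt with hp' | hp'
  · have hq' : sideVal a b q < 0 := lt_of_le_of_ne (not_lt.1 fun h ↦ hp'.not_gt (hpq.2 h)) hq
    exact iff_of_false (Set.ordConnected_Iio.uIcc_subset hp' hq' hx').not_gt hp'.not_gt
  · exact iff_of_true (Set.ordConnected_Ioi.uIcc_subset hp' (hpq.1 hp') hx') hp'

lemma flip_xor_count_le {s₁ s₂ s₃ s₄ : Prop} (h : (s₁ ↔ s₃) → (s₂ ↔ s₄) → (s₁ ↔ s₂)) :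
    (if Xor s₁ s₄ then 1 else 0) + (if Xor s₂ s₃ then 1 else 0) ≤
      (if Xor s₁ s₃ then 1 else 0) + (if Xor s₂ s₄ then (1 : ℕ) else 0) := by
  by_cases s₁ <;> by_cases s₂ <;> by_cases s₃ <;> by_cases s₄ <;> simp_all [Xor]

theorem stmt2_general (p1 p2 p3 p4 a b : Pl)
    (hcross : Cross (p1, p3) (p2, p4))
    (h1 : p1 ∉ lineThrough a b) (h2 : p2 ∉ lineThrough a b)
    (h3 : p3 ∉ lineThrough a b) (h4 : p4 ∉ lineThrough a b) :
    (if LineCross (lineThrough a b) (p1, p4) then 1 else 0) +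
        (if LineCross (lineThrough a b) (p2, p3) then 1 else 0) ≤
      (if LineCross (lineThrough a b) (p1, p3) then 1 else 0) +
        (if LineCross (lineThrough a b) (p2, p4) then (1 : ℕ) else 0) := by
  rw [mem_lineThrough_iff] at h1 h2 h3 h4
  obtain ⟨x, hx, -⟩ := hcross
  have hx' : x ∈ segment ℝ p1 p3 ∩ segment ℝ p2 p4 := hx ▸ rfl
  simp only [lineCross_lineThrough_iff h1 h4, lineCross_lineThrough_iff h2 h3,
    lineCross_lineThrough_iff h1 h3, lineCross_lineThrough_iff h2 h4]
  exact flip_xor_count_le fun h13 h24 ↦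
    (pos_iff_of_mem_segment h1 h3 h13 hx'.1).symm.trans (pos_iff_of_mem_segment h2 h4 h24 hx'.2)

/-- a flip never increases the potential `Φ_ℓ` of a line avoiding the four
flipped points: the number of segments among the new pair `{p1p4, p2p3}` crossed by the
line is at most the number among the old pair `{p1p3, p2p4}`. -/
theorem stmt2 (p1 p2 p3 p4 a b : Pl) (hab : a ≠ b)
    (hgp : GenPos ({p1, p2, p3, p4} : Set Pl))
    (hcross : Cross (p1, p3) (p2, p4))
    (h1 : p1 ∉ lineThrough a b) (h2 : p2 ∉ lineThrough a b)
    (h3 : p3 ∉ lineThrough a b) (h4 : p4 ∉ lineThrough a b) :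
    (if LineCross (lineThrough a b) (p1, p4) then 1 else 0) +
        (if LineCross (lineThrough a b) (p2, p3) then 1 else 0) ≤
      (if LineCross (lineThrough a b) (p1, p3) then 1 else 0) +
        (if LineCross (lineThrough a b) (p2, p4) then (1 : ℕ) else 0) :=
  stmt2_general p1 p2 p3 p4 a b hcross h1 h2 h3 h4
end
end

section
/- For a set P of 2n points in convex position in the plane and a perfect matching M on P given by n straight-line segments, any sequence of flips (each flip replacing a pair of crossing segments by a pair of non-crossing ones on the same four endpoints, preserving a perfect matching) has length at most n(n-1)/2. -/
open scoped Classical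

noncomputable section

/-!
Count ordered crossing pairs: a perfect matching with `n` segments has at most `n (n - 1)` of
them, and every flip destroys at least two. The flipped pair `ac`, `bd` stops crossing, so it
suffices that every other segment `pq` crosses at most as many of the new segments `ad`, `bc` as
of the old ones. By convex position `p` and `q` lie outside the quadrilateral
`K = conv {a, b, c, d}`, so `[p, q]` crosses a chord of `K` exactly when it enters `K` and the
line `pq` separates the chord's endpoints. Since the diagonals `ac` and `bd` cross, a line that
separates neither diagonal has all four points on one side; a sign count finishes the argument.
-/

open Finset

lemma sideVal_lineMap_s5 (p q u v : Pl) (s : ℝ) :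
    sideVal p q (AffineMap.lineMap u v s) = (1 - s) * sideVal p q u + s * sideVal p q v := by
  simp only [sideVal, AffineMap.lineMap_apply_module, Prod.fst_add, Prod.snd_add,
    Prod.smul_fst, Prod.smul_snd, smul_eq_mul]
  ring

lemma sideVal_self_left (p q : Pl) : sideVal p q p = 0 := by simp [sideVal]

lemma sideVal_self_right (p q : Pl) : sideVal p q q = 0 := by simp [sideVal]; ring

lemma sideVal_eq_zero_of_mem_segment {p q x : Pl} (hx : x ∈ segment ℝ p q) :
    sideVal p q x = 0 := by
  obtain ⟨t, -, rfl⟩ := (segment_eq_image_lineMap ℝ p q).subset hx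
  simp [sideVal_lineMap_s5, sideVal_self_left, sideVal_self_right]

/-- The witness is the orthogonal projection parameter `⟪x - p, q - p⟫ / ‖q - p‖²`. -/
lemma exists_lineMap_eq_of_sideVal_eq_zero_s5 {p q x : Pl} (hpq : p ≠ q) (hx : sideVal p q x = 0) :
    ∃ t : ℝ, AffineMap.lineMap p q t = x := by
  have hd : (q.1 - p.1) ^ 2 + (q.2 - p.2) ^ 2 ≠ 0 := by
    intro h
    apply hpq
    ext <;> nlinarith [sq_nonneg (q.1 - p.1), sq_nonneg (q.2 - p.2)]
  refine ⟨((x.1 - p.1) * (q.1 - p.1) + (x.2 - p.2) * (q.2 - p.2)) /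
    ((q.1 - p.1) ^ 2 + (q.2 - p.2) ^ 2), ?_⟩
  unfold sideVal at hx
  rw [AffineMap.lineMap_apply_module]
  ext <;> simp only [Prod.fst_add, Prod.snd_add, Prod.smul_fst, Prod.smul_snd, smul_eq_mul] <;>
    field_simp
  · linear_combination (q.2 - p.2) * hx
  · linear_combination -(q.1 - p.1) * hx

lemma collinear_of_sideVal_eq_zero {p q x : Pl} (hpq : p ≠ q) (hx : sideVal p q x = 0) :
    Collinear ℝ ({p, q, x} : Set Pl) := by
  obtain ⟨t, rfl⟩ := exists_lineMap_eq_of_sideVal_eq_zero_s5 hpq hx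
  exact collinear_triple_of_mem_affineSpan_pair (left_mem_affineSpan_pair ℝ p q)
    (right_mem_affineSpan_pair ℝ p q) (AffineMap.lineMap_mem_affineSpan_pair t p q)

lemma GenPos.sideVal_ne_zero {S : Set Pl} (hgp : GenPos S) {p q x : Pl} (hp : p ∈ S)
    (hq : q ∈ S) (hx : x ∈ S) (hpq : p ≠ q) (hpx : p ≠ x) (hqx : q ≠ x) :
    sideVal p q x ≠ 0 :=
  fun h => hgp p hp q hq x hx hpq hpx hqx (collinear_of_sideVal_eq_zero hpq h)

lemma mul_convex_comb_pos {α β s : ℝ} (h : 0 < α * β) (hs0 : 0 ≤ s) (hs1 : s ≤ 1) :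
    0 < α * ((1 - s) * α + s * β) := by
  have hα : 0 < α * α := mul_self_pos.2 (left_ne_zero_of_mul h.ne')
  rcases hs1.lt_or_eq with hs1 | rfl
  · nlinarith
  · linarith

/-- Convexity of open half-planes. -/
lemma sideVal_mul_pos_of_mem_segment {p q u v x : Pl} (huv : 0 < sideVal p q u * sideVal p q v)
    (hx : x ∈ segment ℝ u v) : 0 < sideVal p q u * sideVal p q x := by
  obtain ⟨s, ⟨hs0, hs1⟩, rfl⟩ := (segment_eq_image_lineMap ℝ u v).subset hx
  rw [sideVal_lineMap_s5]
  exact mul_convex_comb_pos huv hs0 hs1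

lemma Cross.symm {s t : Seg} (h : Cross s t) : Cross t s := by
  obtain ⟨x, hx, h1, h2, h3, h4⟩ := h
  exact ⟨x, Set.inter_comm _ _ ▸ hx, h3, h4, h1, h2⟩

lemma cross_comm {s t : Seg} : Cross s t ↔ Cross t s := ⟨Cross.symm, Cross.symm⟩

lemma cross_swap_right_iff {s : Seg} {u v : Pl} : Cross s (v, u) ↔ Cross s (u, v) := by
  simp only [Cross, segSet, segment_symm]
  constructor <;> rintro ⟨x, hx, h1, h2, h3, h4⟩ <;> exact ⟨x, hx, h1, h2, h4, h3⟩

lemma not_cross_self (s : Seg) : ¬ Cross s s := by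
  rintro ⟨x, hx, h1, -⟩
  have : s.1 ∈ segSet s ∩ segSet s := ⟨left_mem_segment ℝ _ _, left_mem_segment ℝ _ _⟩
  exact h1 (hx ▸ this).symm

lemma Cross.exists_mem {s t : Seg} (h : Cross s t) : ∃ x, x ∈ segSet s ∧ x ∈ segSet t := by
  obtain ⟨x, hx, -⟩ := h
  exact ⟨x, (hx.symm.subset rfl).1, (hx.symm.subset rfl).2⟩

lemma sideVal_mul_neg_of_cross {p q u v : Pl} (h : Cross (p, q) (u, v))
    (hu : sideVal p q u ≠ 0) (hv : sideVal p q v ≠ 0) :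
    sideVal p q u * sideVal p q v < 0 := by
  obtain ⟨x, hxpq, hxuv⟩ := h.exists_mem
  refine (mul_ne_zero hu hv).lt_or_gt.resolve_right fun hpos => ?_
  have := sideVal_mul_pos_of_mem_segment hpos hxuv
  rw [sideVal_eq_zero_of_mem_segment hxpq, mul_zero] at this
  exact this.false

/-- The crossing point of the diagonals of `acbd` lies on the common side of `a, c` and on the
common side of `b, d`. -/
lemma sideVal_mul_pos_of_cross {p q a b c d : Pl} (hX : Cross (a, c) (b, d))
    (hac : 0 < sideVal p q a * sideVal p q c) (hbd : 0 < sideVal p q b * sideVal p q d) :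
    0 < sideVal p q a * sideVal p q b := by
  obtain ⟨x, hxac, hxbd⟩ := hX.exists_mem
  have hax := sideVal_mul_pos_of_mem_segment hac hxac
  have hbx := sideVal_mul_pos_of_mem_segment hbd hxbd
  have : 0 < (sideVal p q a * sideVal p q b) * (sideVal p q x * sideVal p q x) := by
    nlinarith [mul_pos hax hbx]
  exact pos_of_mul_pos_left this (mul_self_nonneg _)

lemma exists_mem_segment_sideVal_eq_zero {p q u v : Pl}
    (huv : sideVal p q u * sideVal p q v < 0) :
    ∃ x ∈ segment ℝ u v, sideVal p q x = 0 := by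
  set α := sideVal p q u
  set β := sideVal p q v
  have hne : α - β ≠ 0 := fun h => by
    rw [sub_eq_zero.1 h] at huv
    exact (mul_self_nonneg β).not_gt huv
  have hs : 0 ≤ α / (α - β) ∧ α / (α - β) ≤ 1 := by
    rcases (left_ne_zero_of_mul huv.ne).lt_or_gt with hα | hα
    · have hαβ : α - β < 0 := by nlinarith
      exact ⟨div_nonneg_of_nonpos hα.le hαβ.le, (div_le_one_of_neg hαβ).2 (by nlinarith)⟩
    · have hαβ : 0 < α - β := by nlinarith
      exact ⟨div_nonneg hα.le hαβ.le, (div_le_one hαβ).2 (by nlinarith)⟩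
  refine ⟨AffineMap.lineMap u v (α / (α - β)),
    (segment_eq_image_lineMap ℝ u v).symm.subset ⟨_, hs, rfl⟩, ?_⟩
  rw [sideVal_lineMap_s5]
  field_simp
  ring

/-- Otherwise the segment from `x` to a point of `[p, q] ∩ K`, which lies on the line `pq`
inside `K`, would pass through `p` or `q`. -/
lemma mem_segment_of_sideVal_eq_zero {K : Set Pl} (hK : Convex ℝ K) {p q x : Pl}
    (hpK : p ∉ K) (hqK : q ∉ K) (hmeet : (segment ℝ p q ∩ K).Nonempty) (hxK : x ∈ K)
    (hx : sideVal p q x = 0) : x ∈ segment ℝ p q := by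
  obtain ⟨w, hwpq, hwK⟩ := hmeet
  have hpq : p ≠ q := by
    rintro rfl
    rw [segment_same, Set.mem_singleton_iff] at hwpq
    exact hpK (hwpq ▸ hwK)
  obtain ⟨t, rfl⟩ := exists_lineMap_eq_of_sideVal_eq_zero_s5 hpq hx
  obtain ⟨r, ⟨hr0, hr1⟩, rfl⟩ := (segment_eq_image_lineMap ℝ p q).subset hwpq
  have hline : ∀ t₀ ∈ Set.uIcc r t, AffineMap.lineMap p q t₀ ∈ K := fun t₀ ht₀ =>
    hK.segment_subset hwK hxK <| by
      rw [← image_segment, segment_eq_uIcc]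
      exact Set.mem_image_of_mem _ ht₀
  rw [segment_eq_image_lineMap]
  refine Set.mem_image_of_mem _ ⟨?_, ?_⟩
  · by_contra! ht
    exact hpK (by simpa using hline 0 (Set.mem_uIcc.2 (Or.inr ⟨ht.le, hr0⟩)))
  · by_contra! ht
    exact hqK (by simpa using hline 1 (Set.mem_uIcc.2 (Or.inl ⟨hr1, ht.le⟩)))

lemma eq_of_mem_segment_of_sideVal_eq {p q u v x y : Pl}
    (huv : sideVal p q u ≠ sideVal p q v) (hx : x ∈ segment ℝ u v) (hy : y ∈ segment ℝ u v)
    (hxy : sideVal p q x = sideVal p q y) : x = y := by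
  obtain ⟨s, -, rfl⟩ := (segment_eq_image_lineMap ℝ u v).subset hx
  obtain ⟨s', -, rfl⟩ := (segment_eq_image_lineMap ℝ u v).subset hy
  rw [sideVal_lineMap_s5, sideVal_lineMap_s5] at hxy
  have : (s - s') * (sideVal p q v - sideVal p q u) = 0 := by linear_combination hxy
  rw [(mul_eq_zero.1 this).resolve_right (sub_ne_zero.2 huv.symm) |> sub_eq_zero.1]

lemma Cross.segment_inter_nonempty {K : Set Pl} (hK : Convex ℝ K) {p q u v : Pl}
    (h : Cross (p, q) (u, v)) (huK : u ∈ K) (hvK : v ∈ K) : (segment ℝ p q ∩ K).Nonempty := by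
  obtain ⟨x, hxpq, hxuv⟩ := h.exists_mem
  exact ⟨x, hxpq, hK.segment_subset huK hvK hxuv⟩

lemma cross_iff_of_convex {K : Set Pl} (hK : Convex ℝ K) {p q u v : Pl} (hpK : p ∉ K)
    (hqK : q ∉ K) (huK : u ∈ K) (hvK : v ∈ K) (hu : sideVal p q u ≠ 0)
    (hv : sideVal p q v ≠ 0) :
    Cross (p, q) (u, v) ↔ (segment ℝ p q ∩ K).Nonempty ∧ sideVal p q u * sideVal p q v < 0 := by
  refine ⟨fun h => ⟨h.segment_inter_nonempty hK huK hvK, sideVal_mul_neg_of_cross h hu hv⟩,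
    fun ⟨hmeet, huv⟩ => ?_⟩
  obtain ⟨x, hxuv, hx⟩ := exists_mem_segment_sideVal_eq_zero huv
  have hxK : x ∈ K := hK.segment_subset huK hvK hxuv
  have hxpq := mem_segment_of_sideVal_eq_zero hK hpK hqK hmeet hxK hx
  have hne : sideVal p q u ≠ sideVal p q v := fun h => by
    rw [h] at huv
    exact (mul_self_nonneg _).not_gt huv
  refine ⟨x, Set.eq_singleton_iff_unique_mem.2 ⟨⟨hxpq, hxuv⟩, fun y ⟨hypq, hyuv⟩ =>
    eq_of_mem_segment_of_sideVal_eq hne hyuv hxuv ?_⟩, ?_, ?_, ?_, ?_⟩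
  · rw [hx, sideVal_eq_zero_of_mem_segment hypq]
  · rintro rfl; exact hpK hxK
  · rintro rfl; exact hqK hxK
  · rintro rfl; exact hu hx
  · rintro rfl; exact hv hx

lemma pair_inter_pair_eq_empty_iff {α : Type*} {a b c d : α} :
    ({a, b} : Set α) ∩ {c, d} = ∅ ↔ a ≠ c ∧ a ≠ d ∧ b ≠ c ∧ b ≠ d := by
  simp only [Set.eq_empty_iff_forall_notMem, Set.mem_inter_iff, Set.mem_insert_iff,
    Set.mem_singleton_iff]
  aesop

lemma ConvexPos.notMem_convexHull {S T : Set Pl} (hconv : ConvexPos S) {p : Pl} (hp : p ∈ S)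
    (hTS : T ⊆ S) (hpT : p ∉ T) : p ∉ convexHull ℝ T :=
  fun h => hconv p hp <| convexHull_mono
    (show T ⊆ S \ {p} from fun _ hz => ⟨hTS hz, fun hzp => hpT (hzp ▸ hz)⟩) h

/-- Applied to the signs of `a, b, c, d` relative to a line; `hdiag` holds when the diagonals
`ac` and `bd` cross. -/
lemma separated_count_le {a b c d : ℝ} (ha : a ≠ 0) (hb : b ≠ 0) (hc : c ≠ 0) (hd : d ≠ 0)
    (hdiag : 0 < a * c → 0 < b * d → 0 < a * b) :
    (if a * d < 0 then 1 else 0) + (if b * c < 0 then 1 else 0) ≤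
      (if a * c < 0 then 1 else 0) + (if b * d < 0 then 1 else 0) := by
  rcases ha.lt_or_gt with ha | ha <;> rcases hb.lt_or_gt with hb | hb <;>
    rcases hc.lt_or_gt with hc | hc <;> rcases hd.lt_or_gt with hd | hd <;>
    simp [mul_neg_iff, mul_pos_iff, ha, hb, hc, hd, ha.not_gt, hb.not_gt, hc.not_gt,
      hd.not_gt] at hdiag ⊢

lemma cross_count_le_of_diagonals_cross {S : Set Pl} (hconv : ConvexPos S) (hgp : GenPos S)
    {a b c d p q : Pl} (ha : a ∈ S) (hb : b ∈ S) (hc : c ∈ S) (hd : d ∈ S) (hp : p ∈ S)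
    (hq : q ∈ S) (hpq : p ≠ q) (hac : ({p, q} : Set Pl) ∩ {a, c} = ∅)
    (hbd : ({p, q} : Set Pl) ∩ {b, d} = ∅) (hX : Cross (a, c) (b, d)) :
    (if Cross (p, q) (a, d) then 1 else 0) + (if Cross (p, q) (b, c) then 1 else 0) ≤
      (if Cross (p, q) (a, c) then 1 else 0) + (if Cross (p, q) (b, d) then 1 else 0) := by
  obtain ⟨hpa, hpc, hqa, hqc⟩ := pair_inter_pair_eq_empty_iff.1 hac
  obtain ⟨hpb, hpd, hqb, hqd⟩ := pair_inter_pair_eq_empty_iff.1 hbd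
  set K := convexHull ℝ ({a, b, c, d} : Set Pl)
  have hK : Convex ℝ K := convex_convexHull ℝ _
  have hsub : ({a, b, c, d} : Set Pl) ⊆ S := by
    simp only [Set.insert_subset_iff, Set.singleton_subset_iff]
    exact ⟨ha, hb, hc, hd⟩
  have hpK : p ∉ K := hconv.notMem_convexHull hp hsub (by simp [hpa, hpb, hpc, hpd])
  have hqK : q ∉ K := hconv.notMem_convexHull hq hsub (by simp [hqa, hqb, hqc, hqd])
  have haK : a ∈ K := subset_convexHull ℝ _ (by simp)
  have hbK : b ∈ K := subset_convexHull ℝ _ (by simp)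
  have hcK : c ∈ K := subset_convexHull ℝ _ (by simp)
  have hdK : d ∈ K := subset_convexHull ℝ _ (by simp)
  by_cases hmeet : (segment ℝ p q ∩ K).Nonempty
  · have hσa := hgp.sideVal_ne_zero hp hq ha hpq hpa hqa
    have hσb := hgp.sideVal_ne_zero hp hq hb hpq hpb hqb
    have hσc := hgp.sideVal_ne_zero hp hq hc hpq hpc hqc
    have hσd := hgp.sideVal_ne_zero hp hq hd hpq hpd hqd
    simp only [cross_iff_of_convex hK hpK hqK haK hdK hσa hσd,
      cross_iff_of_convex hK hpK hqK hbK hcK hσb hσc,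
      cross_iff_of_convex hK hpK hqK haK hcK hσa hσc,
      cross_iff_of_convex hK hpK hqK hbK hdK hσb hσd, hmeet, true_and]
    exact separated_count_le hσa hσb hσc hσd (sideVal_mul_pos_of_cross hX)
  · have hno : ∀ u ∈ K, ∀ v ∈ K, ¬ Cross (p, q) (u, v) := fun u hu v hv h =>
      hmeet (h.segment_inter_nonempty hK hu hv)
    simp [hno a haK d hdK, hno b hbK c hcK]

/-- Counts ordered pairs, so `crossings M M` is twice the number of crossing pairs of `M`. -/
def crossings (A B : Finset Seg) : ℕ := ∑ e ∈ A, ∑ t ∈ B, if Cross e t then 1 else 0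

lemma crossings_comm (A B : Finset Seg) : crossings A B = crossings B A := by
  rw [crossings, crossings, Finset.sum_comm]
  simp only [cross_comm]

lemma crossings_union_left {A A' : Finset Seg} (h : Disjoint A A') (B : Finset Seg) :
    crossings (A ∪ A') B = crossings A B + crossings A' B :=
  Finset.sum_union h

lemma crossings_union_right (A : Finset Seg) {B B' : Finset Seg} (h : Disjoint B B') :
    crossings A (B ∪ B') = crossings A B + crossings A B' := by
  rw [crossings_comm, crossings_union_left h, crossings_comm B, crossings_comm B']

lemma crossings_union_left_le (A A' B : Finset Seg) :
    crossings (A ∪ A') B ≤ crossings A B + crossings A' B := by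
  rw [crossings, crossings, crossings, ← Finset.sum_union_inter]
  exact Nat.le_add_right _ _

lemma crossings_union_right_le (A B B' : Finset Seg) :
    crossings A (B ∪ B') ≤ crossings A B + crossings A B' := by
  rw [crossings_comm, crossings_comm A, crossings_comm A]
  exact crossings_union_left_le B B' A

lemma crossings_self_le (A : Finset Seg) : crossings A A ≤ #A * (#A - 1) := by
  rw [crossings, ← smul_eq_mul, ← Finset.sum_const]
  refine Finset.sum_le_sum fun e he => ?_
  rw [Finset.sum_boole, Nat.cast_id, ← Finset.card_erase_of_mem he]
  exact Finset.card_le_card fun t ht => by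
    rw [Finset.mem_filter] at ht
    exact Finset.mem_erase.2 ⟨fun h => not_cross_self e (h ▸ ht.2), ht.1⟩

lemma crossings_add_two_le {M : Finset Seg} {s₁ s₂ t₁ t₂ : Seg} (hs₁ : s₁ ∈ M) (hs₂ : s₂ ∈ M)
    (hs : Cross s₁ s₂) (ht : ¬ Cross t₁ t₂) (ht₁₂ : t₁ ≠ t₂)
    (hle : ∀ e ∈ M \ {s₁, s₂}, (if Cross e t₁ then 1 else 0) + (if Cross e t₂ then 1 else 0) ≤
      (if Cross e s₁ then 1 else 0) + (if Cross e s₂ then 1 else 0)) :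
    crossings (M \ {s₁, s₂} ∪ {t₁, t₂}) (M \ {s₁, s₂} ∪ {t₁, t₂}) + 2 ≤ crossings M M := by
  set N := M \ {s₁, s₂}
  have hs₁₂ : s₁ ≠ s₂ := fun h => not_cross_self s₁ (h ▸ hs)
  have hM : M = N ∪ {s₁, s₂} := (Finset.sdiff_union_of_subset (by
    simp only [Finset.insert_subset_iff, Finset.singleton_subset_iff]; exact ⟨hs₁, hs₂⟩)).symm
  have hdisj : Disjoint N {s₁, s₂} := Finset.sdiff_disjoint
  have hSS : crossings {s₁, s₂} {s₁, s₂} = 2 := by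
    simp [crossings, Finset.sum_pair hs₁₂, not_cross_self, hs, hs.symm]
  have hTT : crossings {t₁, t₂} {t₁, t₂} = 0 := by
    simp [crossings, Finset.sum_pair ht₁₂, not_cross_self, ht, mt Cross.symm ht]
  have hNT : crossings N {t₁, t₂} ≤ crossings N {s₁, s₂} := by
    refine Finset.sum_le_sum fun e he => ?_
    rw [Finset.sum_pair ht₁₂, Finset.sum_pair hs₁₂]
    exact hle e he
  have hM' := (crossings_union_left_le N {t₁, t₂} _).trans (add_le_add
    (crossings_union_right_le N N {t₁, t₂}) (crossings_union_right_le {t₁, t₂} N {t₁, t₂}))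
  rw [hM, crossings_union_left hdisj, crossings_union_right _ hdisj,
    crossings_union_right _ hdisj, crossings_comm {s₁, s₂} N]
  rw [crossings_comm {t₁, t₂} N] at hM'
  omega

lemma crossings_add_two_le_of_isFlip {P : Finset Pl} {M M' : Finset Seg}
    (hconv : ConvexPos (P : Set Pl)) (hgp : GenPos (P : Set Pl)) (hpm : IsPM P M)
    (hf : IsFlip M M') : crossings M' M' + 2 ≤ crossings M M := by
  obtain ⟨p₁, p₂, p₃, p₄, hX, h₁₃, h₂₄, hflip⟩ := hf
  obtain ⟨⟨hnd, hdisj⟩, hmem, -⟩ := hpm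
  obtain ⟨h₁₂, -, -, -⟩ := pair_inter_pair_eq_empty_iff.1 <|
    hdisj _ h₁₃ _ h₂₄ fun h => not_cross_self _ (h ▸ hX)
  have h₁₃' : p₁ ≠ p₃ := hnd _ h₁₃
  obtain ⟨hp₁, hp₃⟩ := hmem _ h₁₃
  obtain ⟨hp₂, hp₄⟩ := hmem _ h₂₄
  have hother : ∀ p q : Pl, (p, q) ∈ M \ {(p₁, p₃), (p₂, p₄)} →
      p ∈ P ∧ q ∈ P ∧ p ≠ q ∧ ({p, q} : Set Pl) ∩ {p₁, p₃} = ∅ ∧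
        ({p, q} : Set Pl) ∩ {p₂, p₄} = ∅ := by
    intro p q he
    simp only [Finset.mem_sdiff, Finset.mem_insert, Finset.mem_singleton, not_or] at he
    obtain ⟨he, hne₁, hne₂⟩ := he
    exact ⟨(hmem _ he).1, (hmem _ he).2, hnd _ he, hdisj _ he _ h₁₃ hne₁, hdisj _ he _ h₂₄ hne₂⟩
  rcases hflip with ⟨ht, rfl⟩ | ⟨ht, rfl⟩
  · refine crossings_add_two_le h₁₃ h₂₄ hX ht (by simp [h₁₂]) fun ⟨p, q⟩ he => ?_
    obtain ⟨hp, hq, hpq, hd₁₃, hd₂₄⟩ := hother p q he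
    exact cross_count_le_of_diagonals_cross hconv hgp hp₁ hp₂ hp₃ hp₄ hp hq hpq hd₁₃ hd₂₄ hX
  · refine crossings_add_two_le h₁₃ h₂₄ hX ht (by simp [h₁₃']) fun ⟨p, q⟩ he => ?_
    obtain ⟨hp, hq, hpq, hd₁₃, hd₂₄⟩ := hother p q he
    -- the second kind of flip is the first one with `p₂` and `p₄` exchanged
    have := cross_count_le_of_diagonals_cross hconv hgp hp₁ hp₄ hp₃ hp₂ hp hq hpq hd₁₃
      (Set.pair_comm p₂ p₄ ▸ hd₂₄) (cross_swap_right_iff.2 hX)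
    rwa [@cross_swap_right_iff _ p₃ p₄, @cross_swap_right_iff _ p₂ p₄] at this

lemma mul_add_last_le_of_forall_succ_add_le {m k : ℕ} (f : Fin (m + 1) → ℕ)
    (h : ∀ i : Fin m, f i.succ + k ≤ f i.castSucc) : k * m + f (Fin.last m) ≤ f 0 := by
  induction m with
  | zero => simp
  | succ m ih =>
    have hinit := ih (fun i => f i.castSucc) fun i => by
      simpa only [Fin.succ_castSucc] using h i.castSucc
    have hlast : f (Fin.last (m + 1)) + k ≤ f (Fin.last m).castSucc := by
      simpa only [Fin.succ_last] using h (Fin.last m)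
    simp only [Fin.castSucc_zero] at hinit
    rw [Nat.mul_succ]
    omega

theorem stmt5_general (n m : ℕ) (P : Finset Pl)
    (hconv : ConvexPos (P : Set Pl)) (hgp : GenPos (P : Set Pl))
    (M : Fin (m + 1) → Finset Seg)
    (hpm : ∀ i, IsPM P (M i) ∧ (M i).card = n)
    (hflip : ∀ i : Fin m, IsFlip (M i.castSucc) (M i.succ)) :
    m ≤ n * (n - 1) / 2 := by
  have hdescent := mul_add_last_le_of_forall_succ_add_le (fun i => crossings (M i) (M i))
    fun i => crossings_add_two_le_of_isFlip hconv hgp (hpm i.castSucc).1 (hflip i)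
  have hstart : crossings (M 0) (M 0) ≤ n * (n - 1) := (hpm 0).2 ▸ crossings_self_le (M 0)
  rw [Nat.le_div_iff_mul_le two_pos]
  omega

/-- for `2n` points in convex position, any flip sequence of perfect
matchings has length at most `n(n-1)/2`. -/
theorem stmt5 (n m : ℕ) (P : Finset Pl) (hP : P.card = 2 * n)
    (hconv : ConvexPos (P : Set Pl)) (hgp : GenPos (P : Set Pl))
    (M : Fin (m + 1) → Finset Seg)
    (hpm : ∀ i, IsPM P (M i) ∧ (M i).card = n)
    (hflip : ∀ i : Fin m, IsFlip (M i.castSucc) (M i.succ)) :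
    m ≤ n * (n - 1) / 2 :=
  stmt5_general n m P hconv hgp M hpm hflip
end
end
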